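/- arXiv:1811.07093 — 3 statements merged into one kernel-verified Lean document; each statement's English description precedes it below -/
import Mathlib

section
/- The spawning potential ratio F ↦ SPR*(F) = ∑_{a=r}^{A−1} W_a m_a ℒ_a(F) e^{−τZ_a(F)} + W_A m_A ℒ_A(F) e^{−τZ_A(F)}/(1 − e^{−Z_A(F)}) is strictly decreasing in F ≥ 0, provided the selectivity coefficients c_a are positive for a ≥ r, and tends to 0 as F → ∞. -/
/-!
Because every mortality `Z a` is affine in `F`, each cohort term `W a * m a * ℒ a * e^{-τ Z a}` is a
positive constant times `e^{-k_a F}` with slope `k_a = ∑_{x<a} c x + τ c a > 0`, hence strictly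
decreasing to `0`. The plus-group denominator `1 - e^{-Z A}` is nondecreasing, positive for `F ≥ 0`
because `M A > 0`, and tends to `1`, so the plus-group quotient behaves in the same way.
-/

open Filter Topology Real

lemma StrictAnti.finset_sum {ι α β : Type*} [Preorder α] [AddCommMonoid β] [PartialOrder β]
    [IsOrderedCancelAddMonoid β] {s : Finset ι} {f : ι → α → β} (hs : s.Nonempty)
    (hf : ∀ i ∈ s, StrictAnti (f i)) : StrictAnti fun x ↦ ∑ i ∈ s, f i x :=
  fun _ _ hxy ↦ Finset.sum_lt_sum_of_nonempty hs fun i hi ↦ hf i hi hxy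

lemma StrictAntiOn.div_of_monotoneOn {α 𝕜 : Type*} [Preorder α] [Field 𝕜] [LinearOrder 𝕜]
    [IsStrictOrderedRing 𝕜] {f g : α → 𝕜} {s : Set α} (hf : StrictAntiOn f s)
    (hg : MonotoneOn g s) (hf₀ : ∀ x ∈ s, 0 ≤ f x) (hg₀ : ∀ x ∈ s, 0 < g x) :
    StrictAntiOn (fun x ↦ f x / g x) s := fun x hx y hy hxy ↦
  calc f y / g y ≤ f y / g x := div_le_div_of_nonneg_left (hf₀ y hy) (hg₀ x hx) (hg hx hy hxy.le)
    _ < f x / g x := div_lt_div_of_pos_right (hf hx hy hxy) (hg₀ x hx)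

lemma strictAnti_const_mul_exp_neg_affine {C k : ℝ} (b : ℝ) (hC : 0 < C) (hk : 0 < k) :
    StrictAnti fun F ↦ C * exp (-(b + k * F)) := fun _ _ hxy ↦
  mul_lt_mul_of_pos_left (exp_lt_exp.2 (by nlinarith)) hC

lemma tendsto_const_mul_exp_neg_affine_atTop (C b : ℝ) {k : ℝ} (hk : 0 < k) :
    Tendsto (fun F ↦ C * exp (-(b + k * F))) atTop (𝓝 0) := by
  have hexponent : Tendsto (fun F ↦ -(b + k * F)) atTop atBot :=
    tendsto_neg_atTop_atBot.comp (tendsto_atTop_add_const_left _ b (tendsto_id.const_mul_atTop hk))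
  simpa using (tendsto_exp_atBot.comp hexponent).const_mul C

lemma monotone_one_sub_exp_neg_affine (M : ℝ) {c : ℝ} (hc : 0 ≤ c) :
    Monotone fun F ↦ 1 - exp (-(M + c * F)) := fun _ _ hxy ↦ by
  dsimp only
  gcongr

lemma one_sub_exp_neg_affine_pos {M c F : ℝ} (hM : 0 < M) (hc : 0 ≤ c) (hF : 0 ≤ F) :
    0 < 1 - exp (-(M + c * F)) :=
  sub_pos.2 (exp_lt_one_iff.2 (by nlinarith))

lemma tendsto_one_sub_exp_neg_affine_atTop (M : ℝ) {c : ℝ} (hc : 0 < c) :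
    Tendsto (fun F ↦ 1 - exp (-(M + c * F))) atTop (𝓝 1) := by
  simpa using tendsto_const_nhds.sub
    ((tendsto_const_mul_exp_neg_affine_atTop 1 M hc).congr fun F ↦ one_mul _)

lemma exp_neg_sum_mul_exp_neg_affine {ι : Type*} (s : Finset ι) (M c : ι → ℝ) (τ : ℝ) (a : ι)
    (F : ℝ) :
    exp (-∑ x ∈ s, (M x + c x * F)) * exp (-(τ * (M a + c a * F))) =
      exp (-((∑ x ∈ s, M x + τ * M a) + (∑ x ∈ s, c x + τ * c a) * F)) := by
  rw [← exp_add, Finset.sum_add_distrib, ← Finset.sum_mul]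
  congr 1
  ring

theorem SPR_strictAnti_tendsto_zero_general
    (A r : ℕ) (hrA : r ≤ A - 1)
    (W m M c : ℕ → ℝ) (τ : ℝ) (hτ : τ ∈ Set.Ioo (0 : ℝ) 1)
    (hW : ∀ a, 0 < W a) (hm : ∀ a, r ≤ a → 0 < m a)
    (hMA : 0 < M A)
    (hc : ∀ a, 0 ≤ c a) (hcr : ∀ a, r ≤ a → 0 < c a)
    (Z : ℕ → ℝ → ℝ) (hZ : ∀ a F, Z a F = M a + c a * F)
    (L : ℕ → ℝ → ℝ)
    (hL : ∀ a F, L a F = Real.exp (-(∑ x ∈ Finset.Icc 1 (a - 1), Z x F)))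
    (SPR : ℝ → ℝ)
    (hSPR : ∀ F, SPR F =
      (∑ a ∈ Finset.Icc r (A - 1), W a * m a * L a F * Real.exp (-(τ * Z a F))) +
      W A * m A * L A F * Real.exp (-(τ * Z A F)) / (1 - Real.exp (-(Z A F)))) :
    StrictAntiOn SPR (Set.Ici 0) ∧ Tendsto SPR atTop (nhds 0) := by
  set b : ℕ → ℝ := fun a ↦ ∑ x ∈ Finset.Icc 1 (a - 1), M x + τ * M a
  set k : ℕ → ℝ := fun a ↦ ∑ x ∈ Finset.Icc 1 (a - 1), c x + τ * c a
  have hC : ∀ a, r ≤ a → 0 < W a * m a := fun a ha ↦ mul_pos (hW a) (hm a ha)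
  have hk : ∀ a, r ≤ a → 0 < k a := fun a ha ↦
    add_pos_of_nonneg_of_pos (Finset.sum_nonneg fun x _ ↦ hc x) (mul_pos hτ.1 (hcr a ha))
  have hrA' : r ≤ A := hrA.trans (Nat.sub_le A 1)
  have hSPR' : SPR = fun F ↦ ∑ a ∈ Finset.Icc r (A - 1), W a * m a * exp (-(b a + k a * F)) +
      W A * m A * exp (-(b A + k A * F)) / (1 - exp (-(M A + c A * F))) := by
    ext F
    simp only [hSPR, hL, hZ, mul_assoc, exp_neg_sum_mul_exp_neg_affine, b, k]
  subst hSPR'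
  constructor
  · refine (StrictAnti.finset_sum (Finset.nonempty_Icc.2 hrA) fun a ha ↦ ?_).strictAntiOn _
      |>.add (StrictAntiOn.div_of_monotoneOn ?_ ?_ ?_ ?_)
    · exact strictAnti_const_mul_exp_neg_affine _ (hC a (Finset.mem_Icc.1 ha).1)
        (hk a (Finset.mem_Icc.1 ha).1)
    · exact (strictAnti_const_mul_exp_neg_affine _ (hC A hrA') (hk A hrA')).strictAntiOn _
    · exact (monotone_one_sub_exp_neg_affine _ (hc A)).monotoneOn _
    · exact fun F _ ↦ (mul_pos (hC A hrA') (exp_pos _)).le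
    · exact fun F hF ↦ one_sub_exp_neg_affine_pos hMA (hc A) hF
  · simpa using (tendsto_finsetSum _ fun a ha ↦ tendsto_const_mul_exp_neg_affine_atTop _ _
      (hk a (Finset.mem_Icc.1 ha).1)).add
      ((tendsto_const_mul_exp_neg_affine_atTop _ _ (hk A hrA')).div
        (tendsto_one_sub_exp_neg_affine_atTop _ (hcr A hrA')) one_ne_zero)

theorem SPR_strictAnti_tendsto_zero
    (A r : ℕ) (hA : 2 ≤ A) (hr : 1 ≤ r) (hrA : r ≤ A - 1)
    (W m M c : ℕ → ℝ) (τ : ℝ) (hτ : τ ∈ Set.Ioo (0 : ℝ) 1)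
    (hW : ∀ a, 0 < W a) (hm : ∀ a, r ≤ a → 0 < m a) (hm1 : ∀ a, m a ≤ 1)
    (hM : ∀ a, 0 ≤ M a) (hMA : 0 < M A)
    (hc : ∀ a, 0 ≤ c a) (hcr : ∀ a, r ≤ a → 0 < c a)
    (Z : ℕ → ℝ → ℝ) (hZ : ∀ a F, Z a F = M a + c a * F)
    (L : ℕ → ℝ → ℝ)
    (hL : ∀ a F, L a F = Real.exp (-(∑ x ∈ Finset.Icc 1 (a - 1), Z x F)))
    (SPR : ℝ → ℝ)
    (hSPR : ∀ F, SPR F =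
      (∑ a ∈ Finset.Icc r (A - 1), W a * m a * L a F * Real.exp (-(τ * Z a F))) +
      W A * m A * L A F * Real.exp (-(τ * Z A F)) / (1 - Real.exp (-(Z A F)))) :
    StrictAntiOn SPR (Set.Ici 0) ∧ Tendsto SPR atTop (nhds 0) :=
  SPR_strictAnti_tendsto_zero_general A r hrA W m M c τ hτ hW hm hMA hc hcr Z hZ L hL SPR hSPR
end

section
/- For the single-age stochastic Beverton-Holt model N_{t+1} = φ(e^{−Z}N_t)U_t with φ(s) = αs/(β+s), the solution has closed form N_t = α^t (∏_{j=0}^{t−1}U_j) N₀ / ((βe^Z)^t + N₀ ∑_{j=0}^{t−1}(βe^Z)^{t−1−j} α^j ∏_{k=0}^{j−1}U_k), for all t ≥ 1 and N₀ > 0, U_j > 0. -/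
/-!
Multiplying numerator and denominator by `e^Z` turns the step into `N (t+1) = a t * N t / (b + N t)`
with `a t = α U t` and `b = β e^Z`. Writing `N t = P t * N 0 / D t`, with `P t` the product of the
`a k` for `k < t`, this Möbius step acts linearly on `(P, D)`: `P (t+1) = a t * P t` and
`D (t+1) = b * D t + N 0 * P t`, whose solution is the stated denominator. The closed form then
follows by induction, as every `D t` is positive.
-/

open Finset

section BevertonHolt

variable {K : Type*} [Field K]

lemma mul_inv_mul_div_add_inv_mul {c : K} (hc : c ≠ 0) (α β x u : K) :
    α * (c⁻¹ * x) * u / (β + c⁻¹ * x) = α * u * x / (β * c + x) := by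
  rw [← mul_div_mul_left _ _ hc]
  congr 1 <;> field_simp

def bevertonHoltDenom (b x₀ : K) (a : ℕ → K) (t : ℕ) : K :=
  b ^ t + x₀ * ∑ j ∈ range t, b ^ (t - 1 - j) * ∏ k ∈ range j, a k

lemma bevertonHoltDenom_zero (b x₀ : K) (a : ℕ → K) : bevertonHoltDenom b x₀ a 0 = 1 := by
  simp [bevertonHoltDenom]

lemma bevertonHoltDenom_succ (b x₀ : K) (a : ℕ → K) (t : ℕ) :
    bevertonHoltDenom b x₀ a (t + 1) =
      b * bevertonHoltDenom b x₀ a t + x₀ * ∏ k ∈ range t, a k := by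
  have hsum : ∑ j ∈ range t, b ^ (t - j) * ∏ k ∈ range j, a k
      = b * ∑ j ∈ range t, b ^ (t - 1 - j) * ∏ k ∈ range j, a k := by
    rw [mul_sum]
    refine sum_congr rfl fun j hj => ?_
    rw [show t - j = t - 1 - j + 1 by have := mem_range.mp hj; omega, pow_succ]
    ring
  simp only [bevertonHoltDenom, sum_range_succ, hsum, Nat.add_sub_cancel, Nat.sub_self, pow_zero,
    one_mul]
  ring

lemma bevertonHoltDenom_pos {F : Type*} [Field F] [LinearOrder F] [IsStrictOrderedRing F]
    {b x₀ : F} {a : ℕ → F} (hb : 0 < b) (hx₀ : 0 ≤ x₀) (ha : ∀ k, 0 ≤ a k) (t : ℕ) :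
    0 < bevertonHoltDenom b x₀ a t := by
  have hprod : ∀ j, 0 ≤ ∏ k ∈ range j, a k := fun j => prod_nonneg fun k _ => ha k
  unfold bevertonHoltDenom
  have := sum_nonneg fun j (_ : j ∈ range t) => mul_nonneg (pow_pos hb (t - 1 - j)).le (hprod j)
  positivity

theorem eq_prod_mul_div_bevertonHoltDenom {b : K} {a N : ℕ → K}
    (hrec : ∀ t, N (t + 1) = a t * N t / (b + N t))
    (hD : ∀ t, bevertonHoltDenom b (N 0) a t ≠ 0) (t : ℕ) :
    N t = (∏ k ∈ range t, a k) * N 0 / bevertonHoltDenom b (N 0) a t := by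
  induction t with
  | zero => simp [bevertonHoltDenom_zero]
  | succ t ih =>
    have hDt := hD t
    have hDt1 := hD (t + 1)
    rw [bevertonHoltDenom_succ] at hDt1 ⊢
    rw [hrec, ih, prod_range_succ]
    field_simp

end BevertonHolt

theorem stochastic_beverton_holt_closed_form_general
    (α β Z : ℝ) (hα : 0 < α) (hβ : 0 < β)
    (U : ℕ → ℝ) (hU : ∀ j, 0 < U j)
    (N : ℕ → ℝ) (hN0 : 0 < N 0)
    (hrec : ∀ t, N (t + 1) = α * (Real.exp (-Z) * N t) * U t / (β + Real.exp (-Z) * N t)) :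
    ∀ t, 1 ≤ t →
      N t = α ^ t * (∏ j ∈ Finset.range t, U j) * N 0 /
        ((β * Real.exp Z) ^ t +
          N 0 * ∑ j ∈ Finset.range t,
            (β * Real.exp Z) ^ (t - 1 - j) * α ^ j * ∏ k ∈ Finset.range j, U k) := by
  intro t _
  have hstep : ∀ t, N (t + 1) = α * U t * N t / (β * Real.exp Z + N t) := fun t => by
    rw [hrec, Real.exp_neg, mul_inv_mul_div_add_inv_mul (Real.exp_pos Z).ne']
  have hD : ∀ t, bevertonHoltDenom (β * Real.exp Z) (N 0) (fun k => α * U k) t ≠ 0 := fun t =>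
    (bevertonHoltDenom_pos (by positivity) hN0.le (fun k => (mul_pos hα (hU k)).le) t).ne'
  rw [eq_prod_mul_div_bevertonHoltDenom hstep hD t, bevertonHoltDenom]
  simp only [prod_mul_distrib, prod_const, card_range, mul_assoc]

theorem stochastic_beverton_holt_closed_form
    (α β Z : ℝ) (hα : 0 < α) (hβ : 0 < β) (hZ : 0 < Z)
    (U : ℕ → ℝ) (hU : ∀ j, 0 < U j)
    (N : ℕ → ℝ) (hN0 : 0 < N 0)
    (hrec : ∀ t, N (t + 1) = α * (Real.exp (-Z) * N t) * U t / (β + Real.exp (-Z) * N t)) :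
    ∀ t, 1 ≤ t →
      N t = α ^ t * (∏ j ∈ Finset.range t, U j) * N 0 /
        ((β * Real.exp Z) ^ t +
          N 0 * ∑ j ∈ Finset.range t,
            (β * Real.exp Z) ^ (t - 1 - j) * α ^ j * ∏ k ∈ Finset.range j, U k) :=
  stochastic_beverton_holt_closed_form_general α β Z hα hβ U hU N hN0 hrec
end

section
/- Fix α, β > 0. Define g(σ) = E[αU/(β+U)] where U = exp(σW − σ²/2) and W ∼ N(0,1). Then g is strictly decreasing in σ on [0,∞). -/
open Set MeasureTheory

open Real ProbabilityTheory
open scoped NNReal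

/-!
Write `B u = α u / (β + u)` and `v = σ²`, so that `log U ∼ N(-v/2, v)` and `g σ = E[B(U)]`.
For `v₁ < v₂` the Gaussian `N(-v₂/2, v₂)` is the convolution of `N(-v₁/2, v₁)` with
`N(-w/2, w)`, `w = v₂ - v₁`: the lognormal variable of variance parameter `v₂` is the one of
parameter `v₁` times an independent lognormal `V` of mean one. For fixed `u > 0`, strict Jensen
for the strictly concave `B` gives `E[B(u V)] < B(u)` since `V` is not a.s. constant, and
integrating over `u` gives `g σ₂ < g σ₁`.
-/

noncomputable def bevertonHolt (α β u : ℝ) : ℝ := α * u / (β + u)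

section BevertonHolt

variable {α β : ℝ}

theorem bevertonHolt_exp_sub (s t : ℝ) :
    bevertonHolt α β (exp (s - t)) = α * exp s / (β * exp t + exp s) := by
  have : 0 < exp t := exp_pos t
  rw [bevertonHolt, exp_sub]
  field_simp

theorem strictConcaveOn_bevertonHolt (hα : 0 < α) (hβ : 0 < β) :
    StrictConcaveOn ℝ (Ici 0) (bevertonHolt α β) := by
  refine ⟨convex_Ici 0, fun x (hx : 0 ≤ x) y (hy : 0 ≤ y) hxy a b ha hb hab => ?_⟩
  have hgap :
      bevertonHolt α β (a * x + b * y) - (a * bevertonHolt α β x + b * bevertonHolt α β y) =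
        α * β * a * b * (x - y) ^ 2 / ((β + x) * (β + y) * (β + (a * x + b * y))) := by
    obtain rfl : b = 1 - a := by linarith
    unfold bevertonHolt
    field_simp
    ring
  have : 0 < α * β * a * b * (x - y) ^ 2 / ((β + x) * (β + y) * (β + (a * x + b * y))) := by
    have := sub_ne_zero.2 hxy
    positivity
  simp only [smul_eq_mul]
  linarith

theorem continuousOn_bevertonHolt (hβ : 0 < β) : ContinuousOn (bevertonHolt α β) (Ici 0) :=
  (continuousOn_const.mul continuousOn_id).div (continuousOn_const.add continuousOn_id)
    fun u (hu : 0 ≤ u) => by positivity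

theorem abs_bevertonHolt_le (hα : 0 ≤ α) (hβ : 0 < β) {u : ℝ} (hu : 0 ≤ u) :
    |bevertonHolt α β u| ≤ α := by
  rw [bevertonHolt, abs_of_nonneg (by positivity), div_le_iff₀ (by positivity)]
  nlinarith

end BevertonHolt

section Measure

variable {X : Type*} {mX : MeasurableSpace X} {μ : Measure X}

theorem integral_lt_integral_of_forall_lt [NeZero μ] {f g : X → ℝ} (hf : Integrable f μ)
    (hg : Integrable g μ) (hfg : ∀ x, f x < g x) : ∫ x, f x ∂μ < ∫ x, g x ∂μ := by
  have hsupp : Function.support (fun x => g x - f x) = univ :=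
    eq_univ_of_forall fun x => sub_ne_zero.2 (hfg x).ne'
  rw [← sub_pos, ← integral_sub hg hf,
    integral_pos_iff_support_of_nonneg (fun x => sub_nonneg.2 (hfg x).le) (hg.sub hf), hsupp]
  exact Measure.measure_univ_pos.2 (NeZero.ne μ)

theorem not_ae_eq_const_of_injective [NullSingletonClass μ] [NeZero μ] {Y : Type*} {F : X → Y}
    (hF : Function.Injective F) (c : Y) : ¬ F =ᵐ[μ] Function.const X c := by
  intro hc
  have hnull : μ {x | F x = c} = 0 :=
    Set.Subsingleton.measure_zero (fun x hx y hy => hF (hx.trans hy.symm)) μ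
  obtain ⟨x, hx, hx'⟩ := (hc.and (measure_eq_zero_iff_ae_notMem.1 hnull)).exists
  exact hx' hx

end Measure

section Gaussian

theorem integral_gaussianReal_zero_one (f : ℝ → ℝ) :
    ∫ ω, f ω ∂gaussianReal 0 1 = ∫ ω, f ω * ((√(2 * π))⁻¹ * exp (-(ω ^ 2) / 2)) := by
  simp [integral_gaussianReal_eq_integral_smul, gaussianPDFReal, mul_comm]

theorem integral_gaussianReal_eq_integral_comp_affine {f : ℝ → ℝ} (a b : ℝ)
    (hf : AEStronglyMeasurable f (gaussianReal b (.mk (a ^ 2) (sq_nonneg a)))) :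
    ∫ z, f z ∂gaussianReal b (.mk (a ^ 2) (sq_nonneg a)) =
      ∫ ω, f (a * ω + b) ∂gaussianReal 0 1 := by
  have hlaw : HasLaw (fun ω => a * ω + b) (gaussianReal b (.mk (a ^ 2) (sq_nonneg a)))
      (gaussianReal 0 1) := by
    simpa using
      gaussianReal_add_const (gaussianReal_const_mul (HasLaw.id (μ := gaussianReal 0 1)) a) b
  exact (hlaw.integral_comp hf).symm

theorem integral_exp_gaussianReal (m : ℝ) (v : ℝ≥0) :
    ∫ y, exp y ∂gaussianReal m v = exp (m + v / 2) := by
  simpa [mgf] using congrFun (mgf_id_gaussianReal (μ := m) (v := v)) 1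

end Gaussian

section Lognormal

variable {φ : ℝ → ℝ} {C : ℝ}

theorem integral_comp_exp_gaussianReal_lt (hφ : StrictConcaveOn ℝ (Ici 0) φ)
    (hφc : ContinuousOn φ (Ici 0)) {v : ℝ≥0} (hv : v ≠ 0) (m : ℝ)
    (hφi : Integrable (fun y => φ (exp y)) (gaussianReal (m - v / 2) v)) :
    ∫ y, φ (exp y) ∂gaussianReal (m - v / 2) v < φ (exp m) := by
  have := nullSingletonClass_gaussianReal (μ := m - v / 2) hv
  have hexp : Integrable exp (gaussianReal (m - v / 2) v) := by
    simpa using integrable_exp_mul_gaussianReal (μ := m - v / 2) (v := v) 1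
  have hjensen := hφ.ae_eq_const_or_lt_map_average hφc isClosed_Ici
    (ae_of_all _ fun y => (exp_pos y).le) hexp hφi
  simp only [average_eq_integral, integral_exp_gaussianReal, sub_add_cancel] at hjensen
  exact hjensen.resolve_left (not_ae_eq_const_of_injective exp_injective _)

theorem integrable_comp_exp_of_bound (hφc : ContinuousOn φ (Ici 0))
    (hφC : ∀ u ∈ Ici (0 : ℝ), |φ u| ≤ C) (μ : Measure ℝ) [IsFiniteMeasure μ] :
    Integrable (fun y => φ (exp y)) μ :=
  .of_bound (hφc.comp_continuous continuous_exp fun y => (exp_pos y).le).aestronglyMeasurable C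
    (ae_of_all _ fun y => hφC _ (exp_pos y).le)

theorem integrable_integral_comp_exp_add_of_bound (hφc : ContinuousOn φ (Ici 0))
    (hφC : ∀ u ∈ Ici (0 : ℝ), |φ u| ≤ C) (μ ν : Measure ℝ) [IsFiniteMeasure μ]
    [IsProbabilityMeasure ν] :
    Integrable (fun x => ∫ y, φ (exp (x + y)) ∂ν) μ := by
  have hcont : Continuous fun p : ℝ × ℝ => φ (exp (p.1 + p.2)) :=
    hφc.comp_continuous (continuous_exp.comp continuous_add) fun p => (exp_pos _).le
  refine .of_bound hcont.stronglyMeasurable.integral_prod_right'.aestronglyMeasurable C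
    (ae_of_all _ fun x => ?_)
  simpa using norm_integral_le_of_norm_le_const (μ := ν) (f := fun y => φ (exp (x + y)))
    (ae_of_all _ fun y => hφC _ (exp_pos (x + y)).le)

theorem strictAnti_integral_comp_exp_gaussianReal (hφ : StrictConcaveOn ℝ (Ici 0) φ)
    (hφc : ContinuousOn φ (Ici 0)) (hφC : ∀ u ∈ Ici (0 : ℝ), |φ u| ≤ C) :
    StrictAnti fun v : ℝ≥0 => ∫ y, φ (exp y) ∂gaussianReal (-v / 2) v := by
  intro v₁ v₂ hv
  set w := v₂ - v₁
  have hw : w ≠ 0 := (tsub_pos_of_lt hv).ne'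
  have hconv :
      gaussianReal (-v₂ / 2) v₂ = gaussianReal (-v₁ / 2) v₁ ∗ gaussianReal (-w / 2) w := by
    rw [gaussianReal_conv_gaussianReal, add_tsub_cancel_of_le hv.le, NNReal.coe_sub hv.le]
    congr 1
    ring
  have hinner (x : ℝ) : ∫ y, φ (exp (x + y)) ∂gaussianReal (-w / 2) w < φ (exp x) := by
    have hshift : HasLaw (x + ·) (gaussianReal (x - w / 2) w) (gaussianReal (-w / 2) w) := by
      simpa [neg_div, ← sub_eq_neg_add] using
        gaussianReal_const_add (HasLaw.id (μ := gaussianReal (-w / 2) w)) x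
    refine lt_of_eq_of_lt ?_
      (integral_comp_exp_gaussianReal_lt hφ hφc hw x (integrable_comp_exp_of_bound hφc hφC _))
    exact hshift.integral_comp (integrable_comp_exp_of_bound hφc hφC _).aestronglyMeasurable
  dsimp only
  rw [hconv, integral_conv (integrable_comp_exp_of_bound hφc hφC _)]
  exact integral_lt_integral_of_forall_lt
    (integrable_integral_comp_exp_add_of_bound hφc hφC _ _)
    (integrable_comp_exp_of_bound hφc hφC _) hinner

end Lognormal

theorem expected_recruitment_strictAnti (α β : ℝ) (hα : 0 < α) (hβ : 0 < β)
    (g : ℝ → ℝ)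
    (hg : ∀ σ, g σ = ∫ ω : ℝ,
      α * Real.exp (σ * ω) / (β * Real.exp (σ ^ 2 / 2) + Real.exp (σ * ω)) *
        ((Real.sqrt (2 * Real.pi))⁻¹ * Real.exp (-(ω ^ 2) / 2))) :
    StrictAntiOn g (Set.Ici 0) := by
  have hbound (u : ℝ) (hu : u ∈ Ici 0) : |bevertonHolt α β u| ≤ α :=
    abs_bevertonHolt_le hα.le hβ hu
  have hrepr (σ : ℝ) : g σ = ∫ z, bevertonHolt α β (exp z)
      ∂gaussianReal (-(σ ^ 2) / 2) (.mk (σ ^ 2) (sq_nonneg σ)) := by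
    rw [hg, integral_gaussianReal_eq_integral_comp_affine, integral_gaussianReal_zero_one]
    · simp_rw [neg_div, ← sub_eq_add_neg, bevertonHolt_exp_sub]
    · exact (integrable_comp_exp_of_bound (continuousOn_bevertonHolt hβ) hbound
        _).aestronglyMeasurable
  have hsq : StrictMonoOn (fun σ : ℝ => NNReal.mk (σ ^ 2) (sq_nonneg σ)) (Ici 0) :=
    fun σ₁ hσ₁ σ₂ _ h => pow_lt_pow_left₀ h hσ₁ two_ne_zero
  rw [funext hrepr]
  exact (strictAnti_integral_comp_exp_gaussianReal (strictConcaveOn_bevertonHolt hα hβ)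
    (continuousOn_bevertonHolt hβ) hbound).comp_strictMonoOn hsq
end
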